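/- Let n ≥ 2, K ≥ 1 and let A be an invertible n×n real matrix with det A > 0. If ‖A‖ⁿ ≤ K · det A, where ‖A‖ denotes the operator norm of A on Euclidean ℝⁿ, then ‖A⁻¹‖ⁿ ≤ K^{n−1} · det(A⁻¹). (Consequently, if a differentiable homeomorphism satisfies the distortion inequality |Df(x)|ⁿ ≤ K J(x,f) at points of nonsingular differential, then its inverse satisfies |Dg(y)|ⁿ ≤ K^{n−1} J(y,g).) -/

import Mathlib

open MeasureTheory Set Metric Filter Topology
open scoped ENNReal NNReal InnerProductSpace

noncomputable section

/-- Euclidean `n`-space `ℝⁿ`. -/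
abbrev En (n : ℕ) : Type := EuclideanSpace ℝ (Fin n)

/-- The length (arclength) of a curve `γ : [0,1] → ℝⁿ`, i.e. its total variation on `[0,1]`. -/
def curveLength {n : ℕ} (γ : ℝ → En n) : ℝ≥0∞ := eVariationOn γ (Set.Icc 0 1)

/-- A curve is rectifiable if it has finite length. -/
def Rectifiable {n : ℕ} (γ : ℝ → En n) : Prop := curveLength γ < ⊤

/-- The arclength function `t ↦ length of γ on [0,t]`. -/
def arcFn {n : ℕ} (γ : ℝ → En n) (t : ℝ) : ℝ := (eVariationOn γ (Set.Icc 0 t)).toReal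

/-- The line integral `∫_γ ρ ds` of a nonnegative Borel function with respect to arclength,
defined through the unit-speed (arclength) reparametrisation of `γ`:  if `σ` is `1`-Lipschitz
and satisfies `σ (arcFn γ t) = γ t` on `[0,1]`, then `σ` restricted to `[0, length γ]` is the
arclength parametrisation of `γ` and `∫_γ ρ ds = ∫_{[0, length γ]} ρ(σ(u)) du`. -/
def curveIntegralArc {n : ℕ} (ρ : En n → ℝ≥0∞) (γ : ℝ → En n) : ℝ≥0∞ :=
  ⨆ (σ : ℝ → En n) (_ : LipschitzWith 1 σ ∧ ∀ t ∈ Set.Icc (0:ℝ) 1, σ (arcFn γ t) = γ t),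
    ∫⁻ u in Set.Icc (0:ℝ) (arcFn γ 1), ρ (σ u)

/-- A nonnegative Borel function `ρ` is admissible for the curve family `Γ` if
`∫_γ ρ ds ≥ 1` for every rectifiable `γ ∈ Γ`. -/
def IsAdmissible {n : ℕ} (Γ : Set (ℝ → En n)) (ρ : En n → ℝ≥0∞) : Prop :=
  Measurable ρ ∧ ∀ γ ∈ Γ, Rectifiable γ → 1 ≤ curveIntegralArc ρ γ

/-- The conformal modulus `M(Γ)` of a family of curves in `ℝⁿ`. -/
def modulus {n : ℕ} (Γ : Set (ℝ → En n)) : ℝ≥0∞ :=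
  ⨅ (ρ : En n → ℝ≥0∞) (_ : IsAdmissible Γ ρ), ∫⁻ x, ρ x ^ n

/-- A curve (continuous map of `[0,1]`) lying in the set `Ω`. -/
def IsCurveIn {n : ℕ} (Ω : Set (En n)) (γ : ℝ → En n) : Prop :=
  ContinuousOn γ (Set.Icc 0 1) ∧ ∀ t ∈ Set.Icc (0:ℝ) 1, γ t ∈ Ω

/-- The image curve family `fΓ = {f ∘ γ : γ ∈ Γ}`. -/
def imageFam {n : ℕ} (f : En n → En n) (Γ : Set (ℝ → En n)) : Set (ℝ → En n) :=
  (fun γ => f ∘ γ) '' Γ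

/-- A domain: a nonempty open connected set. -/
def IsDomainSet {n : ℕ} (Ω : Set (En n)) : Prop := IsOpen Ω ∧ IsConnected Ω

/-- `f` is a homeomorphism of `Ω` onto `Ω'`. -/
def HomeoOn {n : ℕ} (f : En n → En n) (Ω Ω' : Set (En n)) : Prop :=
  Set.BijOn f Ω Ω' ∧ ContinuousOn f Ω ∧
    ∃ g : En n → En n, ContinuousOn g Ω' ∧ (∀ x ∈ Ω, g (f x) = x) ∧ ∀ y ∈ Ω', f (g y) = y

/-- `f` is a `K`-quasiconformal homeomorphism of `Ω` onto `Ω'`:  it is a homeomorphism and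
`(1/K) M(Γ) ≤ M(fΓ) ≤ K M(Γ)` for every family `Γ` of curves in `Ω`. -/
def IsQC {n : ℕ} (K : ℝ) (f : En n → En n) (Ω Ω' : Set (En n)) : Prop :=
  HomeoOn f Ω Ω' ∧
  ∀ Γ : Set (ℝ → En n), (∀ γ ∈ Γ, IsCurveIn Ω γ) →
    modulus Γ ≤ ENNReal.ofReal K * modulus (imageFam f Γ) ∧
    modulus (imageFam f Γ) ≤ ENNReal.ofReal K * modulus Γ

/-- `Δ(E,F;G)`: the family of all curves `γ : [0,1] → ℝⁿ` with `γ(0) ∈ E`, `γ(1) ∈ F`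
and `γ(t) ∈ G` for `0 < t < 1`. -/
def curvesJoining {n : ℕ} (E F G : Set (En n)) : Set (ℝ → En n) :=
  {γ | ContinuousOn γ (Set.Icc 0 1) ∧ γ 0 ∈ E ∧ γ 1 ∈ F ∧ ∀ t ∈ Set.Ioo (0:ℝ) 1, γ t ∈ G}

/-- `ω_{n-1}`, the surface area of the unit sphere `S^{n-1} ⊂ ℝⁿ`
(equal to `n` times the volume of the unit ball). -/
def unitSphereArea (n : ℕ) : ℝ := n * (volume (Metric.ball (0 : En n) 1)).toReal

/-- The first standard basis vector `e₁` of `ℝⁿ`. -/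
def e1 (n : ℕ) : En n := (WithLp.equiv 2 (Fin n → ℝ)).symm (fun i => if i.val = 0 then 1 else 0)

/-- The Grötzsch capacity `γ_n(t) = M(Δ(B̄ⁿ, {s e₁ : s ≥ t}; ℝⁿ))`. -/
def grotzschCap (n : ℕ) (t : ℝ) : ℝ≥0∞ :=
  modulus (curvesJoining (Metric.closedBall (0 : En n) 1)
    {x : En n | ∃ s : ℝ, t ≤ s ∧ x = s • e1 n} Set.univ)

/-- The Teichmüller capacity `τ_n(t) = M(Δ([-e₁,0], {s e₁ : s ≥ t}; ℝⁿ))`. -/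
def teichCap (n : ℕ) (t : ℝ) : ℝ≥0∞ :=
  modulus (curvesJoining (segment ℝ (-(e1 n)) (0 : En n))
    {x : En n | ∃ s : ℝ, t ≤ s ∧ x = s • e1 n} Set.univ)

/-- The modulus `Mod(R(E,F;G)) = (ω_{n-1} / M(Δ(E,F;G)))^{1/(n-1)}` of a ring. -/
def ringMod {n : ℕ} (E F G : Set (En n)) : ℝ≥0∞ :=
  (ENNReal.ofReal (unitSphereArea n) / modulus (curvesJoining E F G)) ^ ((1:ℝ) / ((n:ℝ) - 1))

end

/-!
Let `σ₀ ≥ ⋯ ≥ σₙ₋₁` be the singular values of `A`. Then `det A = ∏ σᵢ`, every `σᵢ ≤ ‖A‖`, and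
`σₙ₋₁ |x| ≤ |A x|` gives `‖A⁻¹‖ σₙ₋₁ ≤ 1`; hence `‖A⁻¹‖ det A ≤ ‖A‖ⁿ⁻¹`. Raising this to the
`n`-th power and inserting `‖A‖ⁿ ≤ K det A` yields `‖A⁻¹‖ⁿ (det A)ⁿ ≤ (K det A)ⁿ⁻¹`.
-/

open Module InnerProductSpace RCLike

namespace LinearMap

variable {𝕜 E F : Type*} [RCLike 𝕜] [NormedAddCommGroup E] [InnerProductSpace 𝕜 E]
  [FiniteDimensional 𝕜 E] [NormedAddCommGroup F] [InnerProductSpace 𝕜 F] [FiniteDimensional 𝕜 F]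

theorem IsSymmetric.mul_norm_sq_le_re_inner {T : E →ₗ[𝕜] E} (hT : T.IsSymmetric) {n : ℕ}
    (hn : finrank 𝕜 E = n) {c : ℝ} (hc : ∀ i, c ≤ hT.eigenvalues hn i) (x : E) :
    c * ‖x‖ ^ 2 ≤ re ⟪T x, x⟫_𝕜 := by
  set b := hT.eigenvectorBasis hn
  have hnorm : ‖x‖ ^ 2 = ∑ i, ‖b.repr x i‖ ^ 2 := by
    rw [← b.repr.norm_map, EuclideanSpace.norm_sq_eq]
  have hinner : re ⟪T x, x⟫_𝕜 = ∑ i, hT.eigenvalues hn i * ‖b.repr x i‖ ^ 2 := by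
    rw [← b.repr.inner_map_map, PiLp.inner_apply, map_sum]
    refine Finset.sum_congr rfl fun i _ => ?_
    rw [hT.eigenvectorBasis_apply_self_apply, RCLike.inner_apply, map_mul (starRingEnd 𝕜),
      conj_ofReal, mul_left_comm, mul_conj, ← ofReal_pow, ← ofReal_mul, ofReal_re]
  rw [hnorm, hinner, Finset.mul_sum]
  exact Finset.sum_le_sum fun i _ => mul_le_mul_of_nonneg_right (hc i) (sq_nonneg _)

theorem norm_apply_sq_eq_re_inner_adjoint_comp_self (T : E →ₗ[𝕜] F) (x : E) :
    ‖T x‖ ^ 2 = re ⟪(adjoint T ∘ₗ T) x, x⟫_𝕜 := by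
  rw [comp_apply, adjoint_inner_left, inner_self_eq_norm_sq]

theorem singularValues_mul_norm_le (T : E →ₗ[𝕜] F) (x : E) :
    T.singularValues (finrank 𝕜 E - 1) * ‖x‖ ≤ ‖T x‖ := by
  rcases Nat.eq_zero_or_pos (finrank 𝕜 E) with h0 | hpos
  · simp [T.singularValues_of_finrank_le (by omega : finrank 𝕜 E ≤ finrank 𝕜 E - 1)]
  have hmin : ∀ i, T.singularValues (finrank 𝕜 E - 1) ^ 2 ≤
      T.isSymmetric_adjoint_comp_self.eigenvalues rfl i := fun i => by
    rw [← T.sq_singularValues_fin rfl]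
    exact pow_le_pow_left₀ (T.singularValues_nonneg _)
      (T.singularValues_antitone (by omega)) 2
  refine le_of_pow_le_pow_left₀ two_ne_zero (norm_nonneg _) ?_
  rw [mul_pow, norm_apply_sq_eq_re_inner_adjoint_comp_self]
  exact T.isSymmetric_adjoint_comp_self.mul_norm_sq_le_re_inner rfl hmin x

end LinearMap

namespace ContinuousLinearMap

variable {𝕜 E F : Type*} [RCLike 𝕜] [NormedAddCommGroup E] [InnerProductSpace 𝕜 E]
  [FiniteDimensional 𝕜 E] [NormedAddCommGroup F] [InnerProductSpace 𝕜 F] [FiniteDimensional 𝕜 F]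

theorem singularValues_le_opNorm (T : E →L[𝕜] F) (i : ℕ) :
    (T : E →ₗ[𝕜] F).singularValues i ≤ ‖T‖ := by
  by_cases hi : i < finrank 𝕜 E
  · obtain ⟨v, hv⟩ :=
      ((T : E →ₗ[𝕜] F).hasEigenvalue_adjoint_comp_self_sq_singularValues hi).exists_hasEigenvector
    have hv0 : 0 < ‖v‖ := norm_pos_iff.mpr hv.2
    have heq : (T : E →ₗ[𝕜] F).singularValues i ^ 2 * ‖v‖ ^ 2 = ‖T v‖ ^ 2 := by
      rw [← coe_coe, LinearMap.norm_apply_sq_eq_re_inner_adjoint_comp_self, hv.apply_eq_smul,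
        inner_smul_left, inner_self_eq_norm_sq_to_K, ← ofReal_pow, ← ofReal_pow, conj_ofReal,
        ← ofReal_mul, ofReal_re]
    have hle : ‖T v‖ ^ 2 ≤ (‖T‖ * ‖v‖) ^ 2 :=
      pow_le_pow_left₀ (norm_nonneg _) (T.le_opNorm v) 2
    refine le_of_pow_le_pow_left₀ two_ne_zero (norm_nonneg T) ?_
    refine le_of_mul_le_mul_right ?_ (pow_pos hv0 2)
    rw [heq, ← mul_pow]
    exact hle
  · rw [LinearMap.singularValues_of_finrank_le _ (not_lt.mp hi)]
    exact norm_nonneg T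

theorem prod_singularValues_le_opNorm_pow (T : E →L[𝕜] F) (k : ℕ) :
    ∏ i ∈ Finset.range k, (T : E →ₗ[𝕜] F).singularValues i ≤ ‖T‖ ^ k := by
  calc ∏ i ∈ Finset.range k, (T : E →ₗ[𝕜] F).singularValues i
      ≤ ∏ _i ∈ Finset.range k, ‖T‖ :=
        Finset.prod_le_prod (fun i _ => LinearMap.singularValues_nonneg _ i)
          (fun i _ => T.singularValues_le_opNorm i)
    _ = ‖T‖ ^ k := by rw [Finset.prod_const, Finset.card_range]

theorem opNorm_mul_singularValues_le_one {T S : E →L[𝕜] E} (h : T * S = 1) :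
    ‖S‖ * (T : E →ₗ[𝕜] E).singularValues (finrank 𝕜 E - 1) ≤ 1 := by
  set σ := (T : E →ₗ[𝕜] E).singularValues (finrank 𝕜 E - 1)
  rcases (LinearMap.singularValues_nonneg _ _ : 0 ≤ σ).eq_or_lt with hσ | hσ
  · simp [σ, ← hσ]
  have hS : ‖S‖ ≤ σ⁻¹ := by
    refine S.opNorm_le_bound (inv_nonneg.mpr hσ.le) fun x => ?_
    rw [inv_mul_eq_div, le_div_iff₀' hσ]
    calc σ * ‖S x‖ ≤ ‖T (S x)‖ := LinearMap.singularValues_mul_norm_le (T : E →ₗ[𝕜] E) (S x)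
      _ = ‖x‖ := by rw [show T (S x) = x from congr($h x)]
  calc ‖S‖ * σ ≤ σ⁻¹ * σ := by gcongr
    _ = 1 := inv_mul_cancel₀ hσ.ne'

theorem opNorm_mul_norm_det_le_of_mul_eq_one {T S : E →L[𝕜] E} (h : T * S = 1) :
    ‖S‖ * ‖(T : E →ₗ[𝕜] E).det‖ ≤ ‖T‖ ^ (finrank 𝕜 E - 1) := by
  rcases Nat.eq_zero_or_pos (finrank 𝕜 E) with h0 | hpos
  · have : Subsingleton E := finrank_zero_iff.mp h0
    simp [Subsingleton.elim S 0]
  have hdet : ‖(T : E →ₗ[𝕜] E).det‖ = (∏ i ∈ Finset.range (finrank 𝕜 E - 1),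
      (T : E →ₗ[𝕜] E).singularValues i) * (T : E →ₗ[𝕜] E).singularValues (finrank 𝕜 E - 1) := by
    rw [← LinearMap.normDet_eq_norm_det, LinearMap.normDet_eq_prod_singularValues,
      ← Finset.prod_range_succ, Nat.sub_add_cancel hpos]
  calc ‖S‖ * ‖(T : E →ₗ[𝕜] E).det‖
      = (∏ i ∈ Finset.range (finrank 𝕜 E - 1), (T : E →ₗ[𝕜] E).singularValues i) *
          (‖S‖ * (T : E →ₗ[𝕜] E).singularValues (finrank 𝕜 E - 1)) := by rw [hdet]; ring
    _ ≤ ‖T‖ ^ (finrank 𝕜 E - 1) * 1 := by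
        gcongr
        · exact mul_nonneg (norm_nonneg S) (LinearMap.singularValues_nonneg _ _)
        · exact T.prod_singularValues_le_opNorm_pow _
        · exact opNorm_mul_singularValues_le_one h
    _ = ‖T‖ ^ (finrank 𝕜 E - 1) := mul_one _

end ContinuousLinearMap

theorem pow_mul_le_pow_pred_of_mul_le_of_pow_le {α : Type*} [Field α] [LinearOrder α]
    [IsStrictOrderedRing α] {a b d K : α} {n : ℕ} (hn : 1 ≤ n) (ha : 0 ≤ a)
    (hb : 0 ≤ b) (hd : 0 < d) (hbd : b * d ≤ a ^ (n - 1)) (haK : a ^ n ≤ K * d) :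
    b ^ n * d ≤ K ^ (n - 1) := by
  obtain ⟨m, rfl⟩ : ∃ m, n = m + 1 := ⟨n - 1, by omega⟩
  rw [Nat.add_sub_cancel] at *
  refine le_of_mul_le_mul_right ?_ (pow_pos hd m)
  calc b ^ (m + 1) * d * d ^ m = (b * d) ^ (m + 1) := by ring
    _ ≤ (a ^ m) ^ (m + 1) := by gcongr
    _ = (a ^ (m + 1)) ^ m := by ring
    _ ≤ (K * d) ^ m := by gcongr
    _ = K ^ m * d ^ m := mul_pow K d m

theorem inverse_distortion_inequality_general (n : ℕ) (hn : 2 ≤ n) (K : ℝ)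
    (A : Matrix (Fin n) (Fin n) ℝ) (hdet : 0 < A.det)
    (h : ‖(Matrix.toEuclideanCLM (𝕜 := ℝ) A : En n →L[ℝ] En n)‖ ^ n ≤ K * A.det) :
    ‖(Matrix.toEuclideanCLM (𝕜 := ℝ) A⁻¹ : En n →L[ℝ] En n)‖ ^ n ≤
      K ^ (n - 1) * (A⁻¹).det := by
  have hmul : Matrix.toEuclideanCLM (𝕜 := ℝ) A * Matrix.toEuclideanCLM (𝕜 := ℝ) A⁻¹ = 1 := by
    rw [← map_mul, Matrix.mul_nonsing_inv A hdet.ne'.isUnit, map_one]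
  have hkey := ContinuousLinearMap.opNorm_mul_norm_det_le_of_mul_eq_one hmul
  rw [Matrix.coe_toEuclideanCLM_eq_toEuclideanLin, LinearMap.det_toLpLin,
    finrank_euclideanSpace_fin, Real.norm_of_nonneg hdet.le] at hkey
  rw [Matrix.det_nonsing_inv, Ring.inverse_eq_inv', ← div_eq_mul_inv, le_div_iff₀ hdet]
  exact pow_mul_le_pow_pred_of_mul_le_of_pow_le (by omega) (norm_nonneg _) (norm_nonneg _) hdet
    hkey h

/-- if an invertible `n×n` real matrix `A` with `det A > 0` satisfies
`‖A‖ⁿ ≤ K det A` (operator norm on Euclidean `ℝⁿ`), then `‖A⁻¹‖ⁿ ≤ K^{n-1} det (A⁻¹)`. -/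
theorem inverse_distortion_inequality (n : ℕ) (hn : 2 ≤ n) (K : ℝ) (hK : 1 ≤ K)
    (A : Matrix (Fin n) (Fin n) ℝ) (hA : IsUnit A) (hdet : 0 < A.det)
    (h : ‖(Matrix.toEuclideanCLM (𝕜 := ℝ) A : En n →L[ℝ] En n)‖ ^ n ≤ K * A.det) :
    ‖(Matrix.toEuclideanCLM (𝕜 := ℝ) A⁻¹ : En n →L[ℝ] En n)‖ ^ n ≤
      K ^ (n - 1) * (A⁻¹).det :=
  inverse_distortion_inequality_general n hn K A hdet h
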